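/- arXiv:2003.12756 — 4 statements merged into one kernel-verified Lean document; each statement's English description precedes it below -/
import Mathlib

section
/- Let N ≥ 1 and let f₁,…,f_N : ℝ → ℝ be functions, each equal on all of ℝ to its Taylor series at 0, with all Taylor coefficients f_k^{(m)}(0)/m! strictly positive. For 1 ≤ k ≤ N−1 and l,m ∈ ℕ set φ_k(l,m) := (d^m/dt^m)|_{t=0} (f_k(t))^l / m!. Then g := f_N ∘ ⋯ ∘ f₁ is equal on all of ℝ to its Taylor series at 0, and for every t ∈ ℝ, g(t) = ∑_{l₁,…,l_N ≥ 0} (f_N^{(l_N)}(0)/l_N!) · φ_{N−1}(l_N, l_{N−1}) ⋯ φ₁(l₂, l₁) · t^{l₁} (the multiple series converging absolutely); moreover every Taylor coefficient g^{(m)}(0)/m! is strictly positive. -/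
open scoped BigOperators

/-- Composition `f (N-1) ∘ ⋯ ∘ f 0` (so with 1-based indexing, `f_N ∘ ⋯ ∘ f₁`). -/
def compUpTo (f : ℕ → ℝ → ℝ) : ℕ → ℝ → ℝ
  | 0 => id
  | (k + 1) => f k ∘ compUpTo f k

/-- Extend a tuple `l : Fin N → ℕ` to `ℕ → ℕ` by zero. -/
def extendTuple (N : ℕ) (l : Fin N → ℕ) : ℕ → ℕ :=
  fun i => if h : i < N then l ⟨i, h⟩ else 0

/-!
Because all coefficients are nonnegative and the series converge on all of `ℝ`, every double
series obtained by substituting one expansion into another converges absolutely: at `|x|` its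
terms are nonnegative with finite iterated sum, and at `x` they have the same absolute values.
So it may be summed in any order. By Cauchy products `φ k l` is the coefficient sequence of
`(f k)ˡ`; substituting from the outermost function inwards gives the multiple series, and
regrouping by the power of `t` gives the Taylor series of the composite, whose `m`-th
coefficient is at least (coefficient 1 of the outer series) · (coefficient `m` of the inner one).
-/

open PowerSeries Finset

theorem hasSum_prod_mul_pow_of_nonneg {α β : Type*} {u : α × β → ℝ} (hu : 0 ≤ u)
    (e : α × β → ℕ) {g : ℝ → α → ℝ} {S : ℝ → ℝ}
    (hfiber : ∀ s a, HasSum (fun b => u (a, b) * s ^ e (a, b)) (g s a))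
    (hg : ∀ s, HasSum (g s) (S s)) (s : ℝ) :
    HasSum (fun i => u i * s ^ e i) (S s) := by
  have habs : Summable fun i => u i * |s| ^ e i :=
    (summable_prod_of_nonneg fun i => mul_nonneg (hu i) (by positivity)).mpr
      ⟨fun a => (hfiber |s| a).summable,
        (hg |s|).summable.congr fun a => ((hfiber |s| a).tsum_eq).symm⟩
  have hsummable : Summable fun i => u i * s ^ e i := summable_abs_iff.mp <|
    habs.congr fun i => by rw [abs_mul, abs_pow, abs_of_nonneg (hu i)]
  have hsum := hsummable.hasSum
  rwa [(hsum.prod_fiberwise (hfiber s)).unique (hg s)] at hsum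

theorem PowerSeries.coeff_pow_nonneg {R : Type*} [CommSemiring R] [PartialOrder R]
    [IsOrderedRing R] {p : R⟦X⟧} (hp : ∀ m, 0 ≤ coeff m p) (l m : ℕ) :
    0 ≤ coeff m (p ^ l) := by
  induction l generalizing m with
  | zero => rw [pow_zero, coeff_one]; split_ifs <;> simp
  | succ l ih =>
    rw [pow_succ, coeff_mul]
    exact sum_nonneg fun kl _ => mul_nonneg (ih _) (hp _)

def HasGlobalPowerSeries (F : ℝ → ℝ) (p : ℝ⟦X⟧) : Prop :=
  ∀ x : ℝ, HasSum (fun m => coeff m p * x ^ m) (F x)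

-- `q` may have a nonzero constant term (so `PowerSeries.subst` does not apply) and each
-- coefficient of the substitution is an infinite sum, junk `0` where it diverges.
noncomputable def compSeries (p q : ℝ⟦X⟧) : ℝ⟦X⟧ :=
  mk fun m => ∑' l, coeff l p * coeff m (q ^ l)

namespace HasGlobalPowerSeries

variable {F G : ℝ → ℝ} {p q : ℝ⟦X⟧}

theorem one : HasGlobalPowerSeries (fun _ => 1) 1 := fun x => by
  convert hasSum_ite_eq 0 (1 : ℝ) using 2 with m
  rw [coeff_one]
  split_ifs with hm <;> simp [hm]

theorem mul (hF : HasGlobalPowerSeries F p) (hG : HasGlobalPowerSeries G q) :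
    HasGlobalPowerSeries (fun x => F x * G x) (p * q) := fun x => by
  have hp : Summable fun m => ‖coeff m p * x ^ m‖ := (hF x).summable.norm
  have hq : Summable fun m => ‖coeff m q * x ^ m‖ := (hG x).summable.norm
  have hterm : ∀ m, ∑ kl ∈ antidiagonal m, coeff kl.1 p * x ^ kl.1 * (coeff kl.2 q * x ^ kl.2)
      = coeff m (p * q) * x ^ m := fun m => by
    rw [coeff_mul, sum_mul]
    refine sum_congr rfl fun kl hkl => ?_
    rw [← mem_antidiagonal.mp hkl, pow_add]
    ring
  show HasSum _ (F x * G x)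
  rw [← (hF x).tsum_eq, ← (hG x).tsum_eq,
    tsum_mul_tsum_eq_tsum_sum_antidiagonal_of_summable_norm hp hq]
  simp only [hterm]
  exact ((summable_norm_sum_mul_antidiagonal_of_summable_norm hp hq).of_norm.congr hterm).hasSum

theorem pow (hF : HasGlobalPowerSeries F p) (l : ℕ) :
    HasGlobalPowerSeries (fun x => F x ^ l) (p ^ l) := by
  induction l with
  | zero => simpa using one
  | succ l ih => simpa [pow_succ] using ih.mul hF

theorem iteratedDeriv_zero (hF : HasGlobalPowerSeries F p) (m : ℕ) :
    iteratedDeriv m F 0 = m.factorial * coeff m p := by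
  set P := FormalMultilinearSeries.ofScalars ℝ fun n => coeff n p
  have hradius : P.radius = ⊤ := by
    refine ENNReal.eq_top_of_forall_nnreal_le fun r => P.le_radius_of_summable ?_
    refine (hF r).summable.abs.congr fun n => ?_
    rw [abs_mul, abs_pow, NNReal.abs_eq, FormalMultilinearSeries.ofScalars_norm,
      Real.norm_eq_abs]
  have hball : HasFPowerSeriesOnBall F P 0 ⊤ :=
    ⟨hradius.ge, by simp, fun {y} _ => by
      simpa [P, FormalMultilinearSeries.ofScalars_apply_eq, mul_comm] using hF y⟩
  rw [iteratedDeriv, ← hball.factorial_smul 1 m, FormalMultilinearSeries.ofScalars_apply_eq]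
  simp [mul_comm]

theorem hasSum_prod_coeff_pow (hG : HasGlobalPowerSeries G p) (hp : ∀ m, 0 ≤ coeff m p)
    (hF : HasGlobalPowerSeries F q) (hq : ∀ m, 0 ≤ coeff m q) (x : ℝ) :
    HasSum (fun i : ℕ × ℕ => coeff i.1 p * coeff i.2 (q ^ i.1) * x ^ i.2) (G (F x)) :=
  hasSum_prod_mul_pow_of_nonneg (fun i => mul_nonneg (hp _) (coeff_pow_nonneg hq _ _)) Prod.snd
    (fun s l => by simpa only [mul_assoc] using ((hF.pow l) s).mul_left (coeff l p))
    (fun s => hG (F s)) x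

theorem summable_coeff_mul_coeff_pow (hG : HasGlobalPowerSeries G p) (hp : ∀ m, 0 ≤ coeff m p)
    (hF : HasGlobalPowerSeries F q) (hq : ∀ m, 0 ≤ coeff m q) (m : ℕ) :
    Summable fun l => coeff l p * coeff m (q ^ l) := by
  simpa using (hasSum_prod_coeff_pow hG hp hF hq 1).summable.prod_symm.prod_factor m

theorem comp (hG : HasGlobalPowerSeries G p) (hp : ∀ m, 0 ≤ coeff m p)
    (hF : HasGlobalPowerSeries F q) (hq : ∀ m, 0 ≤ coeff m q) :
    HasGlobalPowerSeries (G ∘ F) (compSeries p q) := fun x => by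
  have hsum := (Equiv.prodComm ℕ ℕ).hasSum_iff.mpr (hasSum_prod_coeff_pow hG hp hF hq x)
  refine hsum.prod_fiberwise fun m => ?_
  simpa [compSeries] using
    ((summable_coeff_mul_coeff_pow hG hp hF hq m).hasSum.mul_right (x ^ m))

theorem coeff_compSeries_pos (hG : HasGlobalPowerSeries G p) (hp : ∀ m, 0 < coeff m p)
    (hF : HasGlobalPowerSeries F q) (hq : ∀ m, 0 < coeff m q) (m : ℕ) :
    0 < coeff m (compSeries p q) := by
  have hp' : ∀ m, 0 ≤ coeff m p := fun m => (hp m).le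
  have hq' : ∀ m, 0 ≤ coeff m q := fun m => (hq m).le
  rw [compSeries, coeff_mk]
  calc 0 < coeff 1 p * coeff m (q ^ 1) := by rw [pow_one]; exact mul_pos (hp 1) (hq m)
    _ ≤ ∑' l, coeff l p * coeff m (q ^ l) :=
      (summable_coeff_mul_coeff_pow hG hp' hF hq' m).le_tsum 1 fun l _ =>
        mul_nonneg (hp' l) (coeff_pow_nonneg hq' l m)

end HasGlobalPowerSeries

theorem extendTuple_of_lt {N : ℕ} (l : Fin N → ℕ) {i : ℕ} (h : i < N) :
    extendTuple N l i = l ⟨i, h⟩ := dif_pos h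

theorem extendTuple_snoc_of_lt {N : ℕ} (l : Fin N → ℕ) (m : ℕ) {i : ℕ} (h : i < N) :
    extendTuple (N + 1) (Fin.snoc l m) i = extendTuple N l i := by
  rw [extendTuple_of_lt _ (h.trans N.lt_succ_self), extendTuple_of_lt _ h]
  exact Fin.snoc_castSucc (i := ⟨i, h⟩) ..

theorem extendTuple_snoc_self {N : ℕ} (l : Fin N → ℕ) (m : ℕ) :
    extendTuple (N + 1) (Fin.snoc l m) N = m := by
  rw [extendTuple_of_lt _ N.lt_succ_self]
  exact Fin.snoc_last (n := N) ..

theorem exists_pos_hasGlobalPowerSeries_compUpTo {f : ℕ → ℝ → ℝ} {p : ℕ → ℝ⟦X⟧} (n : ℕ)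
    (hf : ∀ k ≤ n, HasGlobalPowerSeries (f k) (p k)) (hp : ∀ k ≤ n, ∀ m, 0 < coeff m (p k)) :
    ∃ c : ℝ⟦X⟧, (∀ m, 0 < coeff m c) ∧ HasGlobalPowerSeries (compUpTo f (n + 1)) c := by
  induction n with
  | zero => exact ⟨p 0, hp 0 le_rfl, hf 0 le_rfl⟩
  | succ n ih =>
    obtain ⟨c, hc, hfc⟩ := ih (fun k hk => hf k (hk.trans n.le_succ))
      (fun k hk => hp k (hk.trans n.le_succ))
    exact ⟨compSeries (p (n + 1)) c,
      (hf (n + 1) le_rfl).coeff_compSeries_pos (hp (n + 1) le_rfl) hfc hc,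
      (hf (n + 1) le_rfl).comp (fun m => (hp (n + 1) le_rfl m).le) hfc fun m => (hc m).le⟩

theorem hasSum_comp_compUpTo {f : ℕ → ℝ → ℝ} {p : ℕ → ℝ⟦X⟧} (M : ℕ)
    (hf : ∀ k < M, HasGlobalPowerSeries (f k) (p k)) (hp : ∀ k < M, ∀ m, 0 ≤ coeff m (p k))
    {W : ℝ → ℝ} {w : ℝ⟦X⟧} (hW : HasGlobalPowerSeries W w) (hw : ∀ m, 0 ≤ coeff m w) (t : ℝ) :
    HasSum (fun l : Fin (M + 1) → ℕ =>
        coeff (extendTuple (M + 1) l M) w *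
          (∏ k ∈ range M, coeff (extendTuple (M + 1) l k) (p k ^ extendTuple (M + 1) l (k + 1))) *
          t ^ extendTuple (M + 1) l 0)
      (W (compUpTo f M t)) := by
  induction M generalizing W w t with
  | zero =>
    refine (Equiv.funUnique (Fin 1) ℕ).symm.hasSum_iff.mp ((hW t).congr_fun fun m => ?_)
    simp [extendTuple]
  | succ M ih =>
    have hf' : ∀ k < M, HasGlobalPowerSeries (f k) (p k) := fun k hk =>
      hf k (hk.trans M.lt_succ_self)
    have hp' : ∀ k < M, ∀ m, 0 ≤ coeff m (p k) := fun k hk => hp k (hk.trans M.lt_succ_self)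
    have hfM := hf M M.lt_succ_self
    have hpM := hp M M.lt_succ_self
    have hsum := hasSum_prod_mul_pow_of_nonneg (α := ℕ) (β := Fin (M + 1) → ℕ)
      (u := fun i => coeff i.1 w * (coeff (extendTuple (M + 1) i.2 M) (p M ^ i.1) *
        ∏ k ∈ range M, coeff (extendTuple (M + 1) i.2 k) (p k ^ extendTuple (M + 1) i.2 (k + 1))))
      (fun i => mul_nonneg (hw _) (mul_nonneg (coeff_pow_nonneg hpM _ _)
        (prod_nonneg fun k hk => coeff_pow_nonneg (hp' k (mem_range.mp hk)) _ _)))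
      (fun i => extendTuple (M + 1) i.2 0)
      (g := fun s m => coeff m w * f M (compUpTo f M s) ^ m)
      (fun s m => by
        simpa only [mul_assoc] using
          (ih hf' hp' (hfM.pow m) (coeff_pow_nonneg hpM m) s).mul_left (coeff m w))
      (fun s => hW _) t
    refine (Fin.snocEquiv fun _ => ℕ).hasSum_iff.mp (hsum.congr_fun fun ⟨m, l⟩ => ?_)
    simp only [Function.comp_apply, Fin.snocEquiv, Equiv.coe_fn_mk, prod_range_succ,
      extendTuple_snoc_self, extendTuple_snoc_of_lt _ _ M.lt_succ_self,
      extendTuple_snoc_of_lt _ _ M.succ_pos]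
    rw [prod_congr rfl fun k hk => by
      rw [extendTuple_snoc_of_lt _ _ (Nat.succ_lt_succ (mem_range.mp hk)),
        extendTuple_snoc_of_lt _ _ ((mem_range.mp hk).trans M.lt_succ_self)]]
    ring

/-- If `f₁, …, f_N` (here `f 0, …, f (N-1)`) are each equal on all of `ℝ` to
their Taylor series at `0` with strictly positive coefficients `a k m = f_k^{(m)}(0)/m!`, and
`φ k l m := (d^m/dt^m)|₀ (f_k)^l / m!`, then `g := f_{N-1} ∘ ⋯ ∘ f 0` is equal on `ℝ` to its
Taylor series at `0` with strictly positive coefficients, and for every `t`,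
`g t = ∑_{l : Fin N → ℕ} (f_{N-1}-coefficient at l_{N-1}) · φ_{N-2}(l_{N-1}, l_{N-2}) ⋯
φ_0(l_1, l_0) · t^{l_0}`, the multiple series converging absolutely (in `ℝ`, `HasSum` over a
countable type is unconditional, hence absolute, convergence). -/
theorem stmt_0 (N : ℕ) (hN : 1 ≤ N) (f : ℕ → ℝ → ℝ) (a : ℕ → ℕ → ℝ)
    (ha : ∀ k < N, ∀ m : ℕ, 0 < a k m)
    (hf : ∀ k < N, ∀ x : ℝ, HasSum (fun m : ℕ => a k m * x ^ m) (f k x))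
    (φ : ℕ → ℕ → ℕ → ℝ)
    (hφ : ∀ k l m : ℕ, φ k l m = iteratedDeriv m (fun t => (f k t) ^ l) 0 / (Nat.factorial m)) :
    ∃ c : ℕ → ℝ,
      (∀ m : ℕ, 0 < c m) ∧
      (∀ t : ℝ, HasSum (fun m : ℕ => c m * t ^ m) (compUpTo f N t)) ∧
      (∀ t : ℝ, HasSum
        (fun l : Fin N → ℕ =>
          a (N - 1) (extendTuple N l (N - 1)) *
            (∏ k ∈ Finset.range (N - 1), φ k (extendTuple N l (k + 1)) (extendTuple N l k)) *
            t ^ (extendTuple N l 0))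
        (compUpTo f N t)) := by
  obtain ⟨M, rfl⟩ : ∃ M, N = M + 1 := ⟨N - 1, by omega⟩
  have hseries : ∀ k < M + 1, HasGlobalPowerSeries (f k) (mk (a k)) := fun k hk x => by
    simpa only [coeff_mk] using hf k hk x
  have hpos : ∀ k < M + 1, ∀ m, 0 < coeff m (mk (a k)) := fun k hk m => by
    simpa only [coeff_mk] using ha k hk m
  have hφ_coeff : ∀ k < M + 1, ∀ l m, φ k l m = coeff m (mk (a k) ^ l) := fun k hk l m => by
    rw [hφ, ((hseries k hk).pow l).iteratedDeriv_zero, mul_div_cancel_left₀ _ (by positivity)]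
  obtain ⟨c, hc, hfc⟩ := exists_pos_hasGlobalPowerSeries_compUpTo M
    (fun k hk => hseries k (Nat.lt_succ_of_le hk)) (fun k hk => hpos k (Nat.lt_succ_of_le hk))
  refine ⟨fun m => coeff m c, hc, hfc, fun t => ?_⟩
  have hsum := hasSum_comp_compUpTo M (fun k hk => hseries k (hk.trans M.lt_succ_self))
    (fun k hk m => (hpos k (hk.trans M.lt_succ_self) m).le) (hseries M M.lt_succ_self)
    (fun m => (hpos M M.lt_succ_self m).le) t
  refine hsum.congr_fun fun l => ?_
  simp only [Nat.add_sub_cancel, coeff_mk]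
  rw [prod_congr rfl fun k hk => hφ_coeff k (mem_range.mp hk |>.trans M.lt_succ_self) _ _]
end

section
/- Let f₁ : ℝ → ℝ be given by a power series f₁(x) = ∑_{m≥0} b_m x^m convergent on [−1,1], and suppose there exist constants 0 < r < 1 and 0 < c₂ ≤ c₁ such that c₂ r^m ≤ b_m ≤ c₁ r^m for all m ≥ 0. Then for every integer α ≥ 1 and every m ≥ 0, the m-th Taylor coefficient b_{m,α} of f₁^α at 0 satisfies c₂^α r^m ≤ b_{m,α} ≤ c₁^α (m+1)^{α−1} r^m. -/
open scoped BigOperators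

/-- `powCoef b α m` is the `m`-th Taylor coefficient at `0` of `f₁^α`, where
`f₁(x) = ∑_{m≥0} b m * x^m`; it is given by the `α`-fold Cauchy product of the series. -/
def powCoef (b : ℕ → ℝ) (α m : ℕ) : ℝ :=
  ∑ t ∈ Finset.Nat.antidiagonalTuple α m, ∏ i, b (t i)

/-- If `f₁(x) = ∑ b_m x^m` converges on `[-1,1]` and
`c₂ r^m ≤ b_m ≤ c₁ r^m` with `0 < r < 1`, `0 < c₂ ≤ c₁`, then for all `α ≥ 1` and `m ≥ 0`,
`c₂^α r^m ≤ b_{m,α} ≤ c₁^α (m+1)^{α-1} r^m`. -/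
theorem stmt_1 (b : ℕ → ℝ) (r c₁ c₂ : ℝ)
    (hr0 : 0 < r) (hr1 : r < 1) (hc2 : 0 < c₂) (hcc : c₂ ≤ c₁)
    (hconv : ∀ x ∈ Set.Icc (-1 : ℝ) 1, Summable fun m : ℕ => b m * x ^ m)
    (hb : ∀ m : ℕ, c₂ * r ^ m ≤ b m ∧ b m ≤ c₁ * r ^ m) :
    ∀ α : ℕ, 1 ≤ α → ∀ m : ℕ,
      c₂ ^ α * r ^ m ≤ powCoef b α m ∧
        powCoef b α m ≤ c₁ ^ α * ((m : ℝ) + 1) ^ (α - 1) * r ^ m := by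
  intro α hα m
  obtain ⟨k, rfl⟩ : ∃ k, α = k + 1 := ⟨α - 1, (Nat.succ_pred_eq_of_pos hα).symm⟩
  have hc1 : 0 < c₁ := lt_of_lt_of_le hc2 hcc
  have hbpos : ∀ n, 0 < b n := fun n => lt_of_lt_of_le (by positivity) (hb n).1
  have he : ∀ (c : ℝ) (t : Fin (k+1) → ℕ), (∑ i, t i = m) →
      ∏ i, (c * r ^ t i) = c ^ (k+1) * r ^ m := by
    intro c t ht
    rw [Finset.prod_mul_distrib, Finset.prod_const, Finset.prod_pow_eq_pow_sum, ht,
      Finset.card_univ, Fintype.card_fin]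
  have key : ∀ t ∈ Finset.Nat.antidiagonalTuple (k+1) m,
      c₂ ^ (k+1) * r ^ m ≤ ∏ i, b (t i) ∧ ∏ i, b (t i) ≤ c₁ ^ (k+1) * r ^ m := by
    intro t ht
    rw [Finset.Nat.mem_antidiagonalTuple] at ht
    constructor
    · rw [← he c₂ t ht]
      exact Finset.prod_le_prod (fun i _ => by positivity) (fun i _ => (hb _).1)
    · rw [← he c₁ t ht]
      exact Finset.prod_le_prod (fun i _ => (hbpos _).le) (fun i _ => (hb _).2)
  constructor
  · have hmem : (Fin.cons m 0 : Fin (k+1) → ℕ) ∈ Finset.Nat.antidiagonalTuple (k+1) m := by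
      rw [Finset.Nat.mem_antidiagonalTuple, Fin.sum_univ_succ]
      simp
    calc c₂ ^ (k+1) * r ^ m ≤ ∏ i, b ((Fin.cons m 0 : Fin (k+1) → ℕ) i) :=
          (key _ hmem).1
      _ ≤ powCoef b (k+1) m := by
          unfold powCoef
          exact Finset.single_le_sum (f := fun t : Fin (k+1) → ℕ => ∏ i, b (t i))
            (fun t _ => Finset.prod_nonneg fun i _ => (hbpos _).le) hmem
  · have hcard : (Finset.Nat.antidiagonalTuple (k+1) m).card ≤ (m+1) ^ k := by
      have hinj : Set.InjOn (fun t : Fin (k+1) → ℕ => Fin.init t)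
          (Finset.Nat.antidiagonalTuple (k+1) m) := by
        intro t ht s hs hts
        rw [Finset.mem_coe, Finset.Nat.mem_antidiagonalTuple] at ht hs
        simp only at hts
        have h1 : ∑ i, t i = ∑ i : Fin k, Fin.init t i + t (Fin.last k) :=
          Fin.sum_univ_castSucc t
        have h2 : ∑ i, s i = ∑ i : Fin k, Fin.init s i + s (Fin.last k) :=
          Fin.sum_univ_castSucc s
        have hlast : t (Fin.last k) = s (Fin.last k) := by
          rw [ht] at h1; rw [hs] at h2
          rw [hts] at h1
          omega
        have := Fin.snoc_init_self t
        rw [← Fin.snoc_init_self t, ← Fin.snoc_init_self s, hts, hlast]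
      have hmaps : ∀ t ∈ Finset.Nat.antidiagonalTuple (k+1) m,
          Fin.init t ∈ Fintype.piFinset (fun _ : Fin k => Finset.range (m+1)) := by
        intro t ht
        rw [Finset.Nat.mem_antidiagonalTuple] at ht
        rw [Fintype.mem_piFinset]
        intro j
        rw [Finset.mem_range]
        have : t j.castSucc ≤ ∑ i, t i :=
          Finset.single_le_sum (fun i _ => Nat.zero_le _) (Finset.mem_univ _)
        simp only [Fin.init]
        omega
      calc (Finset.Nat.antidiagonalTuple (k+1) m).card
          ≤ (Fintype.piFinset (fun _ : Fin k => Finset.range (m+1))).card :=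
            Finset.card_le_card_of_injOn _ hmaps hinj
        _ = (m+1) ^ k := by
            rw [Fintype.card_piFinset]
            simp
    have h1 : powCoef b (k+1) m ≤
        (Finset.Nat.antidiagonalTuple (k+1) m).card • (c₁ ^ (k+1) * r ^ m) := by
      unfold powCoef
      exact Finset.sum_le_card_nsmul _ _ _ (fun t ht => (key t ht).2)
    rw [nsmul_eq_mul] at h1
    refine h1.trans ?_
    have h2 : ((Finset.Nat.antidiagonalTuple (k+1) m).card : ℝ) ≤ ((m : ℝ) + 1) ^ k := by
      calc ((Finset.Nat.antidiagonalTuple (k+1) m).card : ℝ) ≤ (((m+1) ^ k : ℕ) : ℝ) := by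
            exact_mod_cast hcard
        _ = ((m : ℝ) + 1) ^ k := by push_cast; ring
    calc ((Finset.Nat.antidiagonalTuple (k+1) m).card : ℝ) * (c₁ ^ (k+1) * r ^ m)
        ≤ ((m : ℝ) + 1) ^ k * (c₁ ^ (k+1) * r ^ m) := by
          apply mul_le_mul_of_nonneg_right h2 (by positivity)
      _ = c₁ ^ (k+1) * ((m : ℝ) + 1) ^ (k + 1 - 1) * r ^ m := by
          simp only [Nat.add_sub_cancel]; ring
end

section
/- Assume f₁(x) = ∑_{m≥0} b_m x^m converges on [−1,1] and there exist constants 0 < r < 1 and 0 < c₂ ≤ c₁ with c₂ r^m ≤ b_m ≤ c₁ r^m for all m ≥ 0. Then for every integer α ≥ 1, the series defining λ_{m,α} converges for every m ≥ 0, and there exist constants C_{1,α}, C_{2,α} > 0, depending only on α, d, r, c₁, c₂, such that for all m ≥ 0: C_{2,α} (r/4)^m ≤ λ_{m,α} ≤ C_{1,α} (m+1)^{α−1} r^m. -/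
open scoped BigOperators

/-- The surface area of the unit sphere `S^{d-1} ⊆ ℝ^d`, i.e. `2 π^{d/2} / Γ(d/2)`. -/
noncomputable def unitSphereArea (d : ℕ) : ℝ :=
  2 * Real.pi ^ ((d : ℝ) / 2) / Real.Gamma ((d : ℝ) / 2)

/-- The eigenvalue `λ_{k,α}` associated with the dot-product kernel `f₁^α` on `S^{d-1}`:
`λ_{k,α} = (|S^{d-2}| Γ((d-1)/2) / 2^{k+1}) ∑_{s≥0} b_{2s+k,α} ((2s+k)!/(2s)!)
Γ(s+1/2)/Γ(s+k+d/2)`. -/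
noncomputable def lamCoef (d : ℕ) (b : ℕ → ℝ) (k α : ℕ) : ℝ :=
  unitSphereArea (d - 1) * Real.Gamma (((d : ℝ) - 1) / 2) / 2 ^ (k + 1) *
    ∑' s : ℕ, powCoef b α (2 * s + k) *
      (((2 * s + k).factorial : ℝ) / ((2 * s).factorial : ℝ)) *
      (Real.Gamma ((s : ℝ) + 1 / 2) / Real.Gamma ((s : ℝ) + (k : ℝ) + (d : ℝ) / 2))

/-!
Each coefficient of `f₁^α` is a sum, over the compositions of `n` into `α` parts, of products of
the `b`'s; every such product lies between `c₂^α r^n` and `c₁^α r^n`, and there are between `1`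
and `(n + 1)^(α - 1)` compositions. In the series for `λ_{k,α}` the Gamma weight of the `s`-th
term is at most `2^(k+2)`, because `(2s+k)!/(2s)! ≤ 2^k (s+k)!/s!`, `Γ(s + 1/2) ≤ 2 s!` and
`(s+k)! ≤ 2 Γ(s+k+d/2)` (on `[1, ∞)` the Gamma function is monotone up to a factor `2`); so the
series is dominated by a multiple of `(s+1)^(α-1) (r²)^s`. For the lower bound keep only the term
`s = 0` and use `Γ(k + d/2) ≤ 2^(k+d) k! (d-1)!`.
-/

open Real Finset
open scoped Nat

local notation "Γ" => Real.Gamma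

section powCoef

open Finset.Nat

lemma card_antidiagonalTuple_le (α n : ℕ) : #(antidiagonalTuple α n) ≤ (n + 1) ^ (α - 1) := by
  cases α with
  | zero => simpa using card_le_one_of_subsingleton (antidiagonalTuple 0 n)
  | succ k =>
    calc #(antidiagonalTuple (k + 1) n)
        ≤ #(Fintype.piFinset fun _ : Fin k => range (n + 1)) := by
          refine card_le_card_of_injOn Fin.tail (fun t ht => ?_) (fun t ht t' ht' htt' => ?_)
          · rw [mem_coe, mem_antidiagonalTuple] at ht
            rw [mem_coe, Fintype.mem_piFinset]
            intro i
            rw [mem_range]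
            have := single_le_sum (fun j _ => Nat.zero_le (t j)) (mem_univ i.succ)
            exact Nat.lt_succ_of_le (ht ▸ this)
          · rw [mem_coe, mem_antidiagonalTuple, Fin.sum_univ_succ] at ht ht'
            have hsum : ∑ i : Fin k, t i.succ = ∑ i : Fin k, t' i.succ := by
              simp only [← Fin.tail_def, htt']
            funext i
            refine Fin.cases ?_ (fun j => congrFun htt' j) i
            omega
      _ = (n + 1) ^ (k + 1 - 1) := by simp

lemma powCoef_nonneg {b : ℕ → ℝ} (hb : ∀ m, 0 ≤ b m) (α n : ℕ) : 0 ≤ powCoef b α n :=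
  sum_nonneg fun _ _ => prod_nonneg fun _ _ => hb _

lemma powCoef_mono {b b' : ℕ → ℝ} (hb : ∀ m, 0 ≤ b m) (hbb' : ∀ m, b m ≤ b' m) (α n : ℕ) :
    powCoef b α n ≤ powCoef b' α n :=
  sum_le_sum fun _ _ => prod_le_prod (fun _ _ => hb _) fun _ _ => hbb' _

lemma powCoef_geometric (c r : ℝ) (α n : ℕ) :
    powCoef (fun m => c * r ^ m) α n = #(antidiagonalTuple α n) * (c ^ α * r ^ n) := by
  rw [powCoef, ← nsmul_eq_mul, ← sum_const]
  refine sum_congr rfl fun t ht => ?_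
  rw [prod_mul_distrib, prod_const, prod_pow_eq_pow_sum, mem_antidiagonalTuple.1 ht, card_univ,
    Fintype.card_fin]

lemma pow_mul_pow_le_powCoef {b : ℕ → ℝ} {c r : ℝ} (hc : 0 ≤ c) (hr : 0 ≤ r)
    (hb : ∀ m, c * r ^ m ≤ b m) {α : ℕ} (hα : 0 < α) (n : ℕ) :
    c ^ α * r ^ n ≤ powCoef b α n := by
  have hcard : (1 : ℝ) ≤ #(antidiagonalTuple α n) := by
    have hmem : Pi.single (⟨0, hα⟩ : Fin α) n ∈ antidiagonalTuple α n := by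
      simp [mem_antidiagonalTuple, sum_pi_single']
    exact_mod_cast card_pos.2 ⟨_, hmem⟩
  calc c ^ α * r ^ n ≤ #(antidiagonalTuple α n) * (c ^ α * r ^ n) :=
        le_mul_of_one_le_left (by positivity) hcard
    _ = powCoef (fun m => c * r ^ m) α n := (powCoef_geometric c r α n).symm
    _ ≤ powCoef b α n := powCoef_mono (fun m => by positivity) hb α n

lemma powCoef_le {b : ℕ → ℝ} {c r : ℝ} (hr : 0 ≤ r) (h0 : ∀ m, 0 ≤ b m)
    (hb : ∀ m, b m ≤ c * r ^ m) (α n : ℕ) :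
    powCoef b α n ≤ ((n : ℝ) + 1) ^ (α - 1) * (c ^ α * r ^ n) := by
  have hc : 0 ≤ c := by simpa using (h0 0).trans (hb 0)
  calc powCoef b α n ≤ powCoef (fun m => c * r ^ m) α n := powCoef_mono h0 hb α n
    _ = #(antidiagonalTuple α n) * (c ^ α * r ^ n) := powCoef_geometric c r α n
    _ ≤ ((n : ℝ) + 1) ^ (α - 1) * (c ^ α * r ^ n) := by
        gcongr
        exact_mod_cast card_antidiagonalTuple_le α n

end powCoef

section Gamma

lemma one_le_Gamma_of_two_le {x : ℝ} (hx : 2 ≤ x) : 1 ≤ Γ x :=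
  Gamma_two ▸ Gamma_strictMonoOn_Ici.monotoneOn Set.self_mem_Ici hx hx

lemma Gamma_le_one_of_mem_Icc {x : ℝ} (h₁ : 1 ≤ x) (h₂ : x ≤ 2) : Γ x ≤ 1 := by
  have := convexOn_Gamma.le_on_segment (Set.mem_Ioi.2 one_pos) (Set.mem_Ioi.2 two_pos)
    (by rw [segment_eq_Icc one_le_two]; exact ⟨h₁, h₂⟩)
  simpa [Gamma_one, Gamma_two] using this

lemma one_le_two_mul_Gamma {x : ℝ} (hx : 1 ≤ x) : 1 ≤ 2 * Γ x := by
  have hΓ := Gamma_pos_of_pos (zero_lt_one.trans_le hx)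
  rcases le_total 2 x with h | h
  · linarith [one_le_Gamma_of_two_le h]
  · -- `x Γ(x) = Γ(x + 1) ≥ 1` with `x ≤ 2`
    have := one_le_Gamma_of_two_le (by linarith : 2 ≤ x + 1)
    rw [Gamma_add_one (by linarith)] at this
    nlinarith

lemma Gamma_le_two_mul_Gamma {x y : ℝ} (hx : 1 ≤ x) (hxy : x ≤ y) : Γ x ≤ 2 * Γ y := by
  rcases le_total 2 x with h | h
  · have := Gamma_strictMonoOn_Ici.monotoneOn h (h.trans hxy) hxy
    linarith [Gamma_pos_of_pos (zero_lt_one.trans_le (hx.trans hxy))]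
  · exact (Gamma_le_one_of_mem_Icc hx h).trans (one_le_two_mul_Gamma (hx.trans hxy))

lemma Gamma_nat_add_half_le (s : ℕ) : Γ (s + 1 / 2) ≤ 2 * s ! := by
  cases s with
  | zero =>
    rw [Nat.cast_zero, zero_add, Gamma_one_half_eq, Nat.factorial_zero, Nat.cast_one, mul_one,
      sqrt_le_left zero_le_two]
    linarith [pi_le_four]
  | succ s =>
    rw [← Gamma_nat_eq_factorial]
    exact Gamma_le_two_mul_Gamma (by push_cast; linarith [s.cast_nonneg (α := ℝ)]) (by linarith)

lemma Gamma_nat_add_le (k n : ℕ) {a : ℝ} (ha : 1 ≤ a) (han : a ≤ n + 1) :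
    Γ (k + a) ≤ 2 ^ (k + n + 1) * (k ! * n ! : ℝ) := by
  have hchoose : (k + n)! ≤ 2 ^ (k + n) * (k ! * n !) := by
    rw [← Nat.add_choose_mul_factorial_mul_factorial, mul_assoc]
    exact Nat.mul_le_mul_right _ (Nat.choose_le_two_pow _ _)
  calc Γ (k + a) ≤ 2 * Γ ((k + n : ℕ) + 1) :=
        Gamma_le_two_mul_Gamma (by linarith [k.cast_nonneg (α := ℝ)]) (by push_cast; linarith)
    _ = 2 * ((k + n)! : ℝ) := by rw [Gamma_nat_eq_factorial]
    _ ≤ 2 ^ (k + n + 1) * (k ! * n ! : ℝ) := by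
        rw [pow_succ, mul_comm _ (2 : ℝ), mul_assoc]
        gcongr
        exact_mod_cast hchoose

lemma factorial_two_mul_add_mul_factorial_le (s k : ℕ) :
    (2 * s + k)! * s ! ≤ 2 ^ k * (s + k)! * (2 * s)! := by
  induction k with
  | zero => simp [mul_comm]
  | succ k ih =>
    calc (2 * s + (k + 1))! * s ! = (2 * s + k + 1) * ((2 * s + k)! * s !) := by
          rw [← add_assoc, Nat.factorial_succ, mul_assoc]
      _ ≤ (2 * (s + k + 1)) * (2 ^ k * (s + k)! * (2 * s)!) := by gcongr; omega
      _ = 2 ^ (k + 1) * (s + (k + 1))! * (2 * s)! := by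
          rw [← add_assoc, Nat.factorial_succ]; ring

lemma factorial_div_mul_Gamma_div_le (s k : ℕ) {a : ℝ} (ha : 1 ≤ a) :
    ((2 * s + k)! : ℝ) / (2 * s)! * (Γ (s + 1 / 2) / Γ (s + k + a)) ≤ 2 ^ (k + 2) := by
  have hΓ : 0 < Γ (s + k + a) := Gamma_pos_of_pos (by positivity)
  have hfact : ((2 * s + k)! * s ! : ℝ) ≤ 2 ^ k * (s + k)! * (2 * s)! := by
    exact_mod_cast factorial_two_mul_add_mul_factorial_le s k
  have hsk : ((s + k)! : ℝ) ≤ 2 * Γ (s + k + a) := by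
    rw [← Gamma_nat_eq_factorial]
    exact Gamma_le_two_mul_Gamma (by push_cast; linarith [(s + k).cast_nonneg (α := ℝ)])
      (by push_cast; linarith)
  rw [div_mul_div_comm, div_le_iff₀ (by positivity)]
  calc ((2 * s + k)! : ℝ) * Γ (s + 1 / 2) ≤ (2 * s + k)! * (2 * s !) := by
        gcongr; exact Gamma_nat_add_half_le s
    _ = 2 * ((2 * s + k)! * s ! : ℝ) := by ring
    _ ≤ 2 * (2 ^ k * (2 * Γ (s + k + a)) * (2 * s)!) :=
        mul_le_mul_of_nonneg_left (hfact.trans (by gcongr)) zero_le_two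
    _ = 2 ^ (k + 2) * ((2 * s)! * Γ (s + k + a)) := by ring

end Gamma

lemma summable_succ_pow_mul_geometric (j : ℕ) {q : ℝ} (hq₀ : 0 < q) (hq₁ : q < 1) :
    Summable fun s : ℕ => ((s : ℝ) + 1) ^ j * q ^ s := by
  have hq : ‖q‖ < 1 := by rwa [norm_of_nonneg hq₀.le]
  have h := (summable_nat_add_iff (f := fun n : ℕ => (n : ℝ) ^ j * q ^ n) 1).2
    (summable_pow_mul_geometric_of_norm_lt_one j hq)
  refine (summable_mul_right_iff hq₀.ne').1 (h.congr fun s => ?_)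
  push_cast
  ring

section lamCoef

noncomputable def lamPrefactor (d : ℕ) : ℝ := unitSphereArea (d - 1) * Γ (((d : ℝ) - 1) / 2)

noncomputable def lamSummand (d : ℕ) (b : ℕ → ℝ) (k α s : ℕ) : ℝ :=
  powCoef b α (2 * s + k) * (((2 * s + k)! : ℝ) / ((2 * s)! : ℝ)) *
    (Γ ((s : ℝ) + 1 / 2) / Γ ((s : ℝ) + (k : ℝ) + (d : ℝ) / 2))

lemma lamCoef_eq (d : ℕ) (b : ℕ → ℝ) (k α : ℕ) :
    lamCoef d b k α = lamPrefactor d / 2 ^ (k + 1) * ∑' s, lamSummand d b k α s :=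
  rfl

lemma lamPrefactor_pos {d : ℕ} (hd : 2 ≤ d) : 0 < lamPrefactor d := by
  have hd' : (2 : ℝ) ≤ d := by exact_mod_cast hd
  have hd₁ : (1 : ℝ) ≤ (d - 1 : ℕ) := by exact_mod_cast (by omega : 1 ≤ d - 1)
  have := Gamma_pos_of_pos (show 0 < ((d - 1 : ℕ) : ℝ) / 2 by positivity)
  have := Gamma_pos_of_pos (show 0 < ((d : ℝ) - 1) / 2 by linarith)
  unfold lamPrefactor unitSphereArea
  positivity

variable {d : ℕ} {b : ℕ → ℝ} {c r : ℝ}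

lemma lamSummand_nonneg (hb : ∀ m, 0 ≤ b m) (k α s : ℕ) : 0 ≤ lamSummand d b k α s :=
  mul_nonneg (mul_nonneg (powCoef_nonneg hb _ _) (by positivity))
    (div_nonneg (Gamma_nonneg_of_nonneg (by positivity)) (Gamma_nonneg_of_nonneg (by positivity)))

lemma lamSummand_le (hd : 2 ≤ d) (hr : 0 ≤ r) (h0 : ∀ m, 0 ≤ b m)
    (hb : ∀ m, b m ≤ c * r ^ m) (k α s : ℕ) :
    lamSummand d b k α s ≤
      4 * (2 * ((k : ℝ) + 1)) ^ (α - 1) * c ^ α * (2 * r) ^ k *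
        (((s : ℝ) + 1) ^ (α - 1) * (r ^ 2) ^ s) := by
  have hc : 0 ≤ c := by simpa using (h0 0).trans (hb 0)
  have hweight := factorial_div_mul_Gamma_div_le s k (a := (d : ℝ) / 2)
    (by rw [le_div_iff₀ two_pos]; exact_mod_cast (by omega : 1 * 2 ≤ d))
  have hn : ((2 * s + k : ℕ) : ℝ) + 1 ≤ 2 * ((k : ℝ) + 1) * ((s : ℝ) + 1) := by
    push_cast
    nlinarith [s.cast_nonneg (α := ℝ), k.cast_nonneg (α := ℝ)]
  calc lamSummand d b k α s
      = powCoef b α (2 * s + k) * (((2 * s + k)! : ℝ) / (2 * s)! *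
          (Γ (s + 1 / 2) / Γ (s + k + d / 2))) := mul_assoc _ _ _
    _ ≤ (((2 * s + k : ℕ) : ℝ) + 1) ^ (α - 1) * (c ^ α * r ^ (2 * s + k)) * 2 ^ (k + 2) :=
        mul_le_mul (powCoef_le hr h0 hb α _) hweight
          (mul_nonneg (by positivity) (div_nonneg (Gamma_nonneg_of_nonneg (by positivity))
            (Gamma_nonneg_of_nonneg (by positivity)))) (by positivity)
    _ ≤ (2 * ((k : ℝ) + 1) * ((s : ℝ) + 1)) ^ (α - 1) * (c ^ α * r ^ (2 * s + k)) *
          2 ^ (k + 2) := by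
        gcongr
    _ = _ := by rw [mul_pow, mul_pow, pow_add, pow_mul, pow_add]; ring

lemma summable_lamSummand (hd : 2 ≤ d) (hr₀ : 0 < r) (hr₁ : r < 1) (h0 : ∀ m, 0 ≤ b m)
    (hb : ∀ m, b m ≤ c * r ^ m) (k α : ℕ) : Summable (lamSummand d b k α) :=
  Summable.of_nonneg_of_le (lamSummand_nonneg h0 k α) (lamSummand_le hd hr₀.le h0 hb k α)
    ((summable_succ_pow_mul_geometric (α - 1) (by positivity) (by nlinarith)).mul_left _)

lemma lamCoef_le (hd : 2 ≤ d) (hr₀ : 0 < r) (hr₁ : r < 1) (h0 : ∀ m, 0 ≤ b m)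
    (hb : ∀ m, b m ≤ c * r ^ m) (k α : ℕ) :
    lamCoef d b k α ≤
      2 * lamPrefactor d * 2 ^ (α - 1) * c ^ α * (∑' s : ℕ, ((s : ℝ) + 1) ^ (α - 1) * (r ^ 2) ^ s) *
        ((k : ℝ) + 1) ^ (α - 1) * r ^ k := by
  have := lamPrefactor_pos hd
  rw [lamCoef_eq]
  calc lamPrefactor d / 2 ^ (k + 1) * ∑' s, lamSummand d b k α s
      ≤ lamPrefactor d / 2 ^ (k + 1) * ∑' s : ℕ, 4 * (2 * ((k : ℝ) + 1)) ^ (α - 1) * c ^ α *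
          (2 * r) ^ k * (((s : ℝ) + 1) ^ (α - 1) * (r ^ 2) ^ s) := by
        refine mul_le_mul_of_nonneg_left ?_ (by positivity)
        exact (summable_lamSummand hd hr₀ hr₁ h0 hb k α).tsum_le_tsum
          (lamSummand_le hd hr₀.le h0 hb k α)
          ((summable_succ_pow_mul_geometric (α - 1) (by positivity) (by nlinarith)).mul_left _)
    _ = _ := by
        rw [tsum_mul_left, mul_pow, mul_pow, pow_succ]
        field_simp
        ring

lemma pow_mul_pow_le_lamSummand_zero (hd : 2 ≤ d) (hc : 0 ≤ c) (hr : 0 ≤ r)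
    (hb : ∀ m, c * r ^ m ≤ b m) {α : ℕ} (hα : 0 < α) (k : ℕ) :
    c ^ α * r ^ k * √π / (2 ^ (k + d) * (d - 1)!) ≤ lamSummand d b k α 0 := by
  have hd' : (2 : ℝ) ≤ d := by exact_mod_cast hd
  have hΓ := Gamma_nat_add_le k (d - 1) (a := (d : ℝ) / 2) (by linarith)
    (by rw [Nat.cast_sub (by omega)]; push_cast; linarith)
  rw [show k + (d - 1) + 1 = k + d by omega] at hΓ
  have hΓpos : 0 < Γ (k + d / 2) := Gamma_pos_of_pos (by positivity)
  have hsummand : lamSummand d b k α 0 = powCoef b α k * k ! * (√π / Γ (k + d / 2)) := by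
    simp only [lamSummand, mul_zero, zero_add, Nat.cast_zero, Nat.factorial_zero, Nat.cast_one,
      div_one, Gamma_one_half_eq]
  rw [hsummand]
  calc c ^ α * r ^ k * √π / (2 ^ (k + d) * (d - 1)!)
      = c ^ α * r ^ k * k ! * (√π / (2 ^ (k + d) * (k ! * (d - 1)! : ℝ))) := by
        field_simp
    _ ≤ powCoef b α k * k ! * (√π / Γ (k + d / 2)) := by
        have hP := pow_mul_pow_le_powCoef hc hr hb hα k
        gcongr
        exact mul_nonneg ((by positivity : 0 ≤ c ^ α * r ^ k).trans hP) (by positivity)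

lemma le_lamCoef (hd : 2 ≤ d) (hc : 0 ≤ c) (hr : 0 ≤ r) (hb : ∀ m, c * r ^ m ≤ b m)
    {k α : ℕ} (hα : 0 < α) (hsum : Summable (lamSummand d b k α)) :
    lamPrefactor d * c ^ α * √π / (2 ^ (d + 1) * (d - 1)!) * (r / 4) ^ k ≤ lamCoef d b k α := by
  have h0 : ∀ m, 0 ≤ b m := fun m => (by positivity : 0 ≤ c * r ^ m).trans (hb m)
  have := lamPrefactor_pos hd
  rw [lamCoef_eq]
  calc lamPrefactor d * c ^ α * √π / (2 ^ (d + 1) * (d - 1)!) * (r / 4) ^ k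
      = lamPrefactor d / 2 ^ (k + 1) * (c ^ α * r ^ k * √π / (2 ^ (k + d) * (d - 1)!)) := by
        rw [div_pow, show (4 : ℝ) ^ k = 2 ^ k * 2 ^ k by rw [← mul_pow]; norm_num, pow_add,
          pow_add, pow_succ]
        field_simp
        ring
    _ ≤ lamPrefactor d / 2 ^ (k + 1) * lamSummand d b k α 0 := by
        gcongr
        exact pow_mul_pow_le_lamSummand_zero hd hc hr hb hα k
    _ ≤ lamPrefactor d / 2 ^ (k + 1) * ∑' s, lamSummand d b k α s := by
        gcongr
        exact hsum.le_tsum 0 fun s _ => lamSummand_nonneg h0 k α s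

end lamCoef

/-- Under the geometric bounds `c₂ r^m ≤ b_m ≤ c₁ r^m`, for every `α ≥ 1`
the series defining `λ_{m,α}` converges for every `m`, and there are constants
`C₁, C₂ > 0` depending only on `α, d, r, c₁, c₂` with
`C₂ (r/4)^m ≤ λ_{m,α} ≤ C₁ (m+1)^{α-1} r^m` for all `m`. -/
theorem stmt_2 (d : ℕ) (hd : 2 ≤ d) (r c₁ c₂ : ℝ)
    (hr0 : 0 < r) (hr1 : r < 1) (hc2 : 0 < c₂) (hcc : c₂ ≤ c₁)
    (α : ℕ) (hα : 1 ≤ α) :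
    ∃ C₁ C₂ : ℝ, 0 < C₁ ∧ 0 < C₂ ∧
      ∀ b : ℕ → ℝ,
        (∀ x ∈ Set.Icc (-1 : ℝ) 1, Summable fun m : ℕ => b m * x ^ m) →
        (∀ m : ℕ, c₂ * r ^ m ≤ b m ∧ b m ≤ c₁ * r ^ m) →
        ∀ m : ℕ,
          (Summable fun s : ℕ => powCoef b α (2 * s + m) *
              (((2 * s + m).factorial : ℝ) / ((2 * s).factorial : ℝ)) *
              (Real.Gamma ((s : ℝ) + 1 / 2) / Real.Gamma ((s : ℝ) + (m : ℝ) + (d : ℝ) / 2))) ∧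
          C₂ * (r / 4) ^ m ≤ lamCoef d b m α ∧
          lamCoef d b m α ≤ C₁ * ((m : ℝ) + 1) ^ (α - 1) * r ^ m := by
  have hc₁ : 0 < c₁ := hc2.trans_le hcc
  have hS : 0 < ∑' s : ℕ, ((s : ℝ) + 1) ^ (α - 1) * (r ^ 2) ^ s :=
    (summable_succ_pow_mul_geometric (α - 1) (by positivity) (by nlinarith)).tsum_pos
      (fun s => by positivity) 0 (by simp)
  have := lamPrefactor_pos hd
  refine ⟨2 * lamPrefactor d * 2 ^ (α - 1) * c₁ ^ α *
      ∑' s : ℕ, ((s : ℝ) + 1) ^ (α - 1) * (r ^ 2) ^ s,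
    lamPrefactor d * c₂ ^ α * √π / (2 ^ (d + 1) * (d - 1)!), by positivity, by positivity,
    fun b _ hb m => ?_⟩
  have h0 : ∀ m, 0 ≤ b m := fun m => (by positivity : 0 ≤ c₂ * r ^ m).trans (hb m).1
  have hsum := summable_lamSummand hd hr0 hr1 h0 (fun m => (hb m).2) m α
  exact ⟨hsum, le_lamCoef hd hc2.le hr0.le (fun m => (hb m).1) hα hsum,
    lamCoef_le hd hr0 hr1 h0 (fun m => (hb m).2) m α⟩
end

section
/- Let f₁(x) = ∑_{m≥0} b_m x^m be convergent on [−1,1] with b_m ≥ 0 for all m, and let g(t) = ∑_{q≥0} a_q t^q be a polynomial of degree D ≥ 1 with a_q ≥ 0 for all q (so a_q = 0 for q > D). Set d* := min(D, n). Then for all k₁,…,kₙ ∈ ℕ, if |{i ∈ {1,…,n} : k_i ≠ 0}| > d*, then μ_{(k₁,…,kₙ)} = 0. -/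
open scoped BigOperators

/-- `μ_{(k₁,…,kₙ)} := ∑_{q≥0} a_q ∑_{α₁+⋯+αₙ=q} (q!/(α₁!⋯αₙ!)) ∏_i λ_{k_i,α_i}`. -/
noncomputable def muCoef (d n : ℕ) (b a : ℕ → ℝ) (k : Fin n → ℕ) : ℝ :=
  ∑' q : ℕ, a q * ∑ t ∈ Finset.Nat.antidiagonalTuple n q,
    (Nat.multinomial Finset.univ t : ℝ) * ∏ i, lamCoef d b (k i) (t i)

lemma powCoef_zero_ne (b : ℕ → ℝ) (m : ℕ) (hm : m ≠ 0) : powCoef b 0 m = 0 := by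
  obtain ⟨m, rfl⟩ := Nat.exists_eq_succ_of_ne_zero hm
  simp [powCoef, Finset.Nat.antidiagonalTuple_zero_succ]

lemma lamCoef_zero (d : ℕ) (b : ℕ → ℝ) (kk : ℕ) (hkk : kk ≠ 0) :
    lamCoef d b kk 0 = 0 := by
  unfold lamCoef
  have : ∀ s : ℕ, powCoef b 0 (2 * s + kk) *
      (((2 * s + kk).factorial : ℝ) / ((2 * s).factorial : ℝ)) *
      (Real.Gamma ((s : ℝ) + 1 / 2) / Real.Gamma ((s : ℝ) + (kk : ℝ) + (d : ℝ) / 2)) = 0 := by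
    intro s
    rw [powCoef_zero_ne b _ (by omega), zero_mul, zero_mul]
  rw [tsum_congr this, tsum_zero, mul_zero]

/-- If `f₁ = ∑ b_m x^m` has nonnegative coefficients and converges on
`[-1,1]`, and `g = ∑ a_q t^q` is a polynomial of degree `D ≥ 1` with nonnegative
coefficients, then with `d* := min(D, n)`, `μ_{(k₁,…,kₙ)} = 0` whenever more than `d*` of
the `k_i` are nonzero. -/
theorem stmt_3 (d n : ℕ) (hd : 2 ≤ d) (hn : 1 ≤ n)
    (b a : ℕ → ℝ) (hb0 : ∀ m : ℕ, 0 ≤ b m)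
    (hconv : ∀ x ∈ Set.Icc (-1 : ℝ) 1, Summable fun m : ℕ => b m * x ^ m)
    (D : ℕ) (hD : 1 ≤ D) (ha0 : ∀ q : ℕ, 0 ≤ a q)
    (haD : ∀ q : ℕ, D < q → a q = 0) (haDne : a D ≠ 0)
    (k : Fin n → ℕ)
    (hk : min D n < (Finset.univ.filter fun i : Fin n => k i ≠ 0).card) :
    muCoef d n b a k = 0 := by
  unfold muCoef
  have hterm : ∀ q : ℕ, a q * ∑ t ∈ Finset.Nat.antidiagonalTuple n q,
      (Nat.multinomial Finset.univ t : ℝ) * ∏ i, lamCoef d b (k i) (t i) = 0 := by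
    intro q
    by_cases hq : D < q
    · rw [haD q hq, zero_mul]
    · push_neg at hq
      rw [Finset.sum_eq_zero, mul_zero]
      intro t ht
      rw [Finset.Nat.mem_antidiagonalTuple] at ht
      -- the support of t has card ≤ q ≤ D and ≤ n
      have hcard : (Finset.univ.filter fun i : Fin n => t i ≠ 0).card ≤ min D n := by
        refine le_min (le_trans ?_ hq) ?_
        · calc (Finset.univ.filter fun i : Fin n => t i ≠ 0).card
              = ∑ i ∈ Finset.univ.filter fun i : Fin n => t i ≠ 0, 1 := by
                simp
            _ ≤ ∑ i ∈ Finset.univ.filter fun i : Fin n => t i ≠ 0, t i := by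
                refine Finset.sum_le_sum fun i hi => ?_
                simp only [Finset.mem_filter] at hi
                omega
            _ ≤ ∑ i, t i := Finset.sum_le_sum_of_subset (Finset.filter_subset _ _)
            _ = q := ht
        · exact le_trans (Finset.card_filter_le _ _) (by simp)
      have hex : ∃ i : Fin n, k i ≠ 0 ∧ t i = 0 := by
        by_contra h
        push_neg at h
        have hsub : (Finset.univ.filter fun i : Fin n => k i ≠ 0) ⊆
            (Finset.univ.filter fun i : Fin n => t i ≠ 0) := by
          intro i hi
          simp only [Finset.mem_filter, Finset.mem_univ, true_and] at hi ⊢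
          exact h i hi
        have := Finset.card_le_card hsub
        omega
      obtain ⟨i, hki, hti⟩ := hex
      rw [Finset.prod_eq_zero (Finset.mem_univ i), mul_zero]
      rw [hti]
      exact lamCoef_zero d b (k i) hki
  rw [tsum_congr hterm, tsum_zero]
end
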